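/- Let G be a triangle-free simple graph of order n ≥ 2. Then PC(G) = n if and only if G is a complete bipartite graph. -/

import Mathlib

namespace PCPaper

variable {V : Type*}

/-- `S` is a dominating set of `G`. -/
def IsDomSet (G : SimpleGraph V) (S : Set V) : Prop :=
  ∀ v : V, v ∈ S ∨ ∃ u ∈ S, G.Adj u v

/-- `S` is a paired dominating set of `G`: a dominating set such that the subgraph of `G`
induced by `S` contains a perfect matching (a matching whose vertex set is exactly `S`). -/
def IsPairedDomSet (G : SimpleGraph V) (S : Set V) : Prop :=
  IsDomSet G S ∧ ∃ M : G.Subgraph, M.verts = S ∧ M.IsMatching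

/-- Disjoint sets `A`, `B`, neither a paired dominating set, whose union is one. -/
def PairedCoalition (G : SimpleGraph V) (A B : Set V) : Prop :=
  Disjoint A B ∧ ¬ IsPairedDomSet G A ∧ ¬ IsPairedDomSet G B ∧ IsPairedDomSet G (A ∪ B)

variable [Fintype V] [DecidableEq V]

/-- `π` is a paired coalition partition of `G`: no part is a paired dominating set and every
part forms a paired coalition with some other part. -/
def IsPCPartition (G : SimpleGraph V) (π : Finpartition (Finset.univ : Finset V)) : Prop :=
  ∀ A ∈ π.parts, ¬ IsPairedDomSet G (A : Set V) ∧
    ∃ B ∈ π.parts, B ≠ A ∧ PairedCoalition G (A : Set V) (B : Set V)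

/-- The paired coalition number: the maximum number of parts of a pc-partition of `G`,
and `0` if `G` admits no pc-partition. -/
noncomputable def pcNumber (G : SimpleGraph V) : ℕ :=
  sSup {k | ∃ π : Finpartition (Finset.univ : Finset V), IsPCPartition G π ∧ π.parts.card = k}

/-- The paired coalition graph of a partition `π` of `G`: vertices are the parts of `π`,
two parts being adjacent iff they form a paired coalition in `G`. -/
def PCG (G : SimpleGraph V) (π : Finpartition (Finset.univ : Finset V)) :
    SimpleGraph {A : Finset V // A ∈ π.parts} where
  Adj A B := PairedCoalition G ((A : Finset V) : Set V) ((B : Finset V) : Set V)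
  symm := by
    constructor
    rintro A B ⟨h1, h2, h3, h4⟩
    exact ⟨h1.symm, h3, h2, by rwa [Set.union_comm]⟩
  loopless := by
    constructor
    rintro A ⟨h1, h2, h3, h4⟩
    exact h2 (by rwa [Set.union_self] at h4)

end PCPaper

namespace PCPaper

/-- `G` is a complete bipartite graph: its vertex set splits into two nonempty
independent sets with all edges between them. -/
def IsCompleteBipartite {V : Type*} (G : SimpleGraph V) : Prop :=
  ∃ s : Set V, s.Nonempty ∧ sᶜ.Nonempty ∧
    ∀ u v : V, G.Adj u v ↔ ((u ∈ s ∧ v ∉ s) ∨ (u ∉ s ∧ v ∈ s))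

end PCPaper

/-!
A partition of the `n` vertices into `n` parts is the partition into singletons, and two
singletons `{u}`, `{v}` form a paired coalition exactly when `uv` is an edge whose two ends
dominate `G`. So `PC(G) = n` iff every vertex lies on a dominating edge. In a triangle-free graph
with a dominating edge `v₀u₀`, the neighbourhoods `N(u₀)` and `N(v₀)` are independent and cover
`V`; if moreover every vertex lies on a dominating edge, every vertex of `N(u₀)` is adjacent to
every vertex outside `N(u₀)`, so `G` is complete bipartite. Conversely, in a complete bipartite
graph any edge dominates.
-/

namespace Finpartition

variable {α : Type*} [DecidableEq α] {s : Finset α}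

theorem card_eq_one_of_card_parts_eq (P : Finpartition s) (h : P.parts.card = s.card) :
    ∀ t ∈ P.parts, t.card = 1 := by
  intro t ht
  have hpos : ∀ u ∈ P.parts, 1 ≤ u.card := fun u hu => (P.nonempty_of_mem_parts hu).card_pos
  by_contra hne
  have hlt : ∑ u ∈ P.parts, 1 < ∑ u ∈ P.parts, u.card :=
    Finset.sum_lt_sum hpos ⟨t, ht, lt_of_le_of_ne (hpos t ht) (Ne.symm hne)⟩
  rw [P.sum_card_parts, Finset.sum_const, smul_eq_mul, mul_one, h] at hlt
  exact lt_irrefl _ hlt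

theorem eq_bot_of_card_parts_eq (P : Finpartition s) (h : P.parts.card = s.card) : P = ⊥ := by
  refine Finpartition.ext (Finset.eq_of_subset_of_card_le (fun t ht => ?_) (by rw [card_bot, h]))
  obtain ⟨a, rfl⟩ := Finset.card_eq_one.1 (P.card_eq_one_of_card_parts_eq h t ht)
  exact mem_bot_iff.2 ⟨a, P.le ht (Finset.mem_singleton_self a), rfl⟩

end Finpartition

namespace PCPaper

variable {V : Type*} {G : SimpleGraph V}

theorem isDomSet_pair_iff {u v : V} :
    IsDomSet G {u, v} ↔ ∀ w, w = u ∨ w = v ∨ G.Adj u w ∨ G.Adj v w := by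
  simp only [IsDomSet, Set.mem_insert_iff, Set.mem_singleton_iff, exists_eq_or_imp,
    exists_eq_left, or_assoc]

theorem not_isPairedDomSet_singleton (v : V) : ¬ IsPairedDomSet G {v} := by
  rintro ⟨-, M, hM, hmatch⟩
  obtain ⟨w, hw, -⟩ := hmatch (hM ▸ Set.mem_singleton v)
  have hwv : w = v := by simpa [hM] using M.edge_vert hw.symm
  exact G.loopless.irrefl v (M.adj_sub (hwv ▸ hw))

theorem isPairedDomSet_pair_iff {u v : V} :
    IsPairedDomSet G {u, v} ↔ G.Adj u v ∧ IsDomSet G {u, v} := by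
  refine ⟨fun ⟨hdom, M, hM, hmatch⟩ => ⟨?_, hdom⟩, fun ⟨huv, hdom⟩ =>
    ⟨hdom, G.subgraphOfAdj huv, SimpleGraph.subgraphOfAdj_verts _ huv,
      SimpleGraph.Subgraph.IsMatching.subgraphOfAdj huv⟩⟩
  obtain ⟨w, hw, -⟩ := hmatch (hM ▸ Set.mem_insert u {v})
  have hw' : w ∈ ({u, v} : Set V) := hM ▸ M.edge_vert hw.symm
  rcases hw' with rfl | rfl
  · exact absurd (M.adj_sub hw) (G.loopless.irrefl w)
  · exact M.adj_sub hw

theorem pairedCoalition_singleton_iff {u v : V} :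
    PairedCoalition G {u} {v} ↔ G.Adj u v ∧ IsDomSet G {u, v} := by
  rw [PairedCoalition, Set.singleton_union, isPairedDomSet_pair_iff]
  exact ⟨fun h => h.2.2.2, fun h => ⟨Set.disjoint_singleton.2 h.1.ne,
    not_isPairedDomSet_singleton u, not_isPairedDomSet_singleton v, h⟩⟩

theorem IsCompleteBipartite.exists_adj_isDomSet (hG : IsCompleteBipartite G) (v : V) :
    ∃ u, G.Adj v u ∧ IsDomSet G {v, u} := by
  obtain ⟨s, ⟨a, ha⟩, ⟨b, hb⟩, hadj⟩ := hG
  have hdom : ∀ x ∈ s, ∀ y ∉ s, IsDomSet G {x, y} := fun x hx y hy =>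
    isDomSet_pair_iff.2 fun w => by by_cases hw : w ∈ s <;> simp [hadj, hx, hy, hw]
  by_cases hv : v ∈ s
  · exact ⟨b, (hadj v b).2 (Or.inl ⟨hv, hb⟩), hdom v hv b hb⟩
  · exact ⟨a, (hadj v a).2 (Or.inr ⟨hv, ha⟩), Set.pair_comm a v ▸ hdom a ha v hv⟩

theorem isCompleteBipartite_of_forall_exists_adj_isDomSet [Nonempty V] (htf : G.CliqueFree 3)
    (h : ∀ v, ∃ u, G.Adj v u ∧ IsDomSet G {v, u}) : IsCompleteBipartite G := by
  have hind := G.isIndepSet_neighborSet_of_triangleFree htf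
  obtain ⟨v₀⟩ := ‹Nonempty V›
  obtain ⟨u₀, h₀, hdom₀⟩ := h v₀
  have hout : ∀ w ∉ G.neighborSet u₀, G.Adj v₀ w := by
    intro w hw
    rcases isDomSet_pair_iff.1 hdom₀ w with rfl | rfl | hw' | hw'
    · exact absurd h₀.symm hw
    · exact h₀
    · exact hw'
    · exact absurd hw' hw
  have hcross : ∀ a ∈ G.neighborSet u₀, ∀ b ∉ G.neighborSet u₀, G.Adj a b := by
    intro a ha b hb
    obtain ⟨a', haa', hdom⟩ := h a
    have ha' : a' ∉ G.neighborSet u₀ := fun ha' => hind u₀ ha ha' haa'.ne haa'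
    rcases isDomSet_pair_iff.1 hdom b with rfl | rfl | hab | ha'b
    · exact absurd ha hb
    · exact haa'
    · exact hab
    · exact absurd ha'b (hind v₀ (hout a' ha') (hout b hb) ha'b.ne)
  refine ⟨G.neighborSet u₀, ⟨v₀, h₀.symm⟩, ⟨u₀, G.loopless.irrefl u₀⟩,
    fun u v => ⟨fun huv => ?_, ?_⟩⟩
  · by_cases hu : u ∈ G.neighborSet u₀ <;> by_cases hv : v ∈ G.neighborSet u₀
    · exact absurd huv (hind u₀ hu hv huv.ne)
    · exact Or.inl ⟨hu, hv⟩
    · exact Or.inr ⟨hu, hv⟩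
    · exact absurd huv (hind v₀ (hout u hu) (hout v hv) huv.ne)
  · rintro (⟨hu, hv⟩ | ⟨hu, hv⟩)
    · exact hcross u hu v hv
    · exact (hcross v hv u hu).symm

section Partition

variable [Fintype V] [DecidableEq V]

theorem isPCPartition_bot_iff :
    IsPCPartition G ⊥ ↔ ∀ v, ∃ u, G.Adj v u ∧ IsDomSet G {v, u} := by
  simp only [IsPCPartition, Finpartition.parts_bot, Finset.mem_map, Finset.mem_univ, true_and,
    Function.Embedding.coeFn_mk, forall_exists_index, forall_apply_eq_imp_iff,
    exists_exists_eq_and, Finset.coe_singleton, ne_eq, Finset.singleton_inj,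
    pairedCoalition_singleton_iff, not_isPairedDomSet_singleton, not_false_eq_true]
  exact forall_congr' fun v =>
    ⟨fun ⟨u, _, h⟩ => ⟨u, h⟩, fun ⟨u, h⟩ => ⟨u, h.1.ne', h⟩⟩

theorem pcNumber_eq_card_iff : pcNumber G = Fintype.card V ↔ IsPCPartition G ⊥ := by
  set S := {k | ∃ π : Finpartition (Finset.univ : Finset V), IsPCPartition G π ∧ π.parts.card = k}
  have hbdd : Fintype.card V ∈ upperBounds S := by
    rintro _ ⟨π, -, rfl⟩
    simpa using π.card_parts_le_card
  change sSup S = _ ↔ _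
  constructor
  · intro h
    rcases S.eq_empty_or_nonempty with hS | hS
    · rw [hS, csSup_empty, Nat.bot_eq_zero, eq_comm, Fintype.card_eq_zero_iff] at h
      intro A hA
      obtain ⟨a, -, -⟩ := Finpartition.mem_bot_iff.1 hA
      exact isEmptyElim a
    · obtain ⟨π, hπ, hcard⟩ := h ▸ Nat.sSup_mem hS ⟨_, hbdd⟩
      rwa [π.eq_bot_of_card_parts_eq (by rw [hcard, Finset.card_univ])] at hπ
  · intro h
    refine le_antisymm (csSup_le' hbdd) (le_csSup ⟨_, hbdd⟩ ⟨⊥, h, ?_⟩)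
    rw [Finpartition.card_bot, Finset.card_univ]

end Partition

end PCPaper

open PCPaper in
/-- For a triangle-free graph `G` of order `n ≥ 2`, `PC(G) = n` iff `G` is a complete
bipartite graph. -/
theorem stmt_18 {V : Type*} [Fintype V] [DecidableEq V] (G : SimpleGraph V)
    (htf : G.CliqueFree 3) (hn : 2 ≤ Fintype.card V) :
    pcNumber G = Fintype.card V ↔ IsCompleteBipartite G := by
  have : Nonempty V := Fintype.card_pos_iff.1 (by omega)
  rw [pcNumber_eq_card_iff, isPCPartition_bot_iff]
  exact ⟨isCompleteBipartite_of_forall_exists_adj_isDomSet htf,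
    IsCompleteBipartite.exists_adj_isDomSet⟩
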